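/- arXiv:1810.00337 — 2 statements merged into one kernel-verified Lean document; each statement's English description precedes it below -/
import Mathlib

section
/- Let S and A be nonempty finite types, p : S → A → PMF S, r : S → A → ℝ, γ ∈ [0,1), T the Bellman optimality operator, and V* its unique fixed point. Then for every V₀ : S → ℝ and every n ∈ ℕ, ‖T^[n] V₀ − V*‖_∞ ≤ γ^n · ‖V₀ − V*‖_∞; in particular the value-iteration sequence n ↦ T^[n] V₀ converges to V* in the supremum norm. -/
/-! The Bellman operator is a `γ`-contraction in the sup norm: an expectation under a probability
vector is `1`-Lipschitz, and a maximum of `γ`-Lipschitz functions is `γ`-Lipschitz. Iterating the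
contraction around the fixed point `V*` gives the geometric rate, and `γ < 1` gives convergence. -/

/-- The Bellman optimality operator of a finite MDP:
`(T V)(s) = max_{a ∈ A} (r s a + γ * ∑ s', p(s'|s,a) * V s')`. -/
noncomputable def bellmanOpt {S A : Type*} [Fintype S] [Fintype A] [Nonempty A]
    (p : S → A → PMF S) (r : S → A → ℝ) (γ : ℝ) (V : S → ℝ) : S → ℝ :=
  fun s => Finset.univ.sup' Finset.univ_nonempty
    (fun a : A => r s a + γ * ∑ s' : S, (p s a s').toReal * V s')

open NNReal

theorem LipschitzWith.pi {α ι : Type*} {β : ι → Type*} [PseudoEMetricSpace α] [Fintype ι]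
    [∀ i, PseudoEMetricSpace (β i)] {K : ℝ≥0} {f : α → ∀ i, β i}
    (hf : ∀ i, LipschitzWith K fun x => f x i) : LipschitzWith K f :=
  fun x y => edist_pi_le_iff.2 fun i => hf i x y

theorem LipschitzWith.finset_sup' {α ι : Type*} [PseudoMetricSpace α] {K : ℝ≥0}
    {s : Finset ι} (hs : s.Nonempty) {f : ι → α → ℝ} (hf : ∀ i ∈ s, LipschitzWith K (f i)) :
    LipschitzWith K fun x => s.sup' hs (f · x) :=
  LipschitzWith.of_le_add_mul K fun x y => Finset.sup'_le hs _ fun i hi =>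
    ((hf i hi).le_add_mul x y).trans (by gcongr; exact Finset.le_sup' (f · y) hi)

namespace PMF

variable {S : Type*} [Fintype S]

theorem sum_toReal_eq_one (q : PMF S) : ∑ s, (q s).toReal = 1 := by
  rw [← ENNReal.toReal_sum fun s _ => q.apply_ne_top s,
    ← tsum_fintype (L := SummationFilter.unconditional _), q.tsum_coe, ENNReal.toReal_one]

theorem lipschitzWith_sum_toReal_mul (q : PMF S) :
    LipschitzWith 1 fun V : S → ℝ => ∑ s, (q s).toReal * V s :=
  LipschitzWith.of_le_add fun U V => by
    calc ∑ s, (q s).toReal * U s ≤ ∑ s, (q s).toReal * (V s + dist U V) := by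
          gcongr with s
          exact le_add_of_sub_left_le ((le_abs_self _).trans (dist_le_pi_dist U V s))
      _ = ∑ s, (q s).toReal * V s + dist U V := by
          simp only [mul_add, Finset.sum_add_distrib, ← Finset.sum_mul, sum_toReal_eq_one,
            one_mul]

end PMF

theorem bellmanOpt_lipschitzWith {S A : Type*} [Fintype S] [Fintype A] [Nonempty A]
    (p : S → A → PMF S) (r : S → A → ℝ) {γ : ℝ} (hγ : 0 ≤ γ) :
    LipschitzWith γ.toNNReal (bellmanOpt p r γ) := by
  refine LipschitzWith.pi fun s => LipschitzWith.finset_sup' _ fun a _ => ?_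
  refine LipschitzWith.of_le_add_mul _ fun U V => ?_
  have hE := (p s a).lipschitzWith_sum_toReal_mul.le_add_mul U V
  rw [NNReal.coe_one, one_mul] at hE
  rw [Real.coe_toNNReal γ hγ]
  calc r s a + γ * ∑ s', (p s a s').toReal * U s'
      ≤ r s a + γ * (∑ s', (p s a s').toReal * V s' + dist U V) := by gcongr
    _ = r s a + γ * ∑ s', (p s a s').toReal * V s' + γ * dist U V := by ring

theorem bellmanOpt_value_iteration_general {S A : Type*} [Fintype S] [Fintype A]
    [Nonempty A]
    (p : S → A → PMF S) (r : S → A → ℝ) (γ : ℝ) (hγ0 : 0 ≤ γ) (hγ1 : γ < 1)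
    (Vstar : S → ℝ) (hfix : bellmanOpt p r γ Vstar = Vstar) :
    ∀ V₀ : S → ℝ,
      (∀ n : ℕ, ‖(bellmanOpt p r γ)^[n] V₀ - Vstar‖ ≤ γ ^ n * ‖V₀ - Vstar‖) ∧
      Filter.Tendsto (fun n : ℕ => (bellmanOpt p r γ)^[n] V₀)
        Filter.atTop (nhds Vstar) := by
  intro V₀
  have hbound (n : ℕ) : ‖(bellmanOpt p r γ)^[n] V₀ - Vstar‖ ≤ γ ^ n * ‖V₀ - Vstar‖ := by
    have h := ((bellmanOpt_lipschitzWith p r hγ0).iterate n).dist_le_mul V₀ Vstar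
    rwa [Function.iterate_fixed hfix, NNReal.coe_pow, Real.coe_toNNReal γ hγ0, dist_eq_norm,
      dist_eq_norm] at h
  refine ⟨hbound, tendsto_iff_norm_sub_tendsto_zero.2 ?_⟩
  refine squeeze_zero (fun _ => norm_nonneg _) hbound ?_
  simpa using (tendsto_pow_atTop_nhds_zero_of_lt_one hγ0 hγ1).mul_const ‖V₀ - Vstar‖

/-- Value iteration converges to the (unique) fixed point `V*` of the Bellman
optimality operator at a geometric rate:
`‖T^[n] V₀ − V*‖ ≤ γ^n ‖V₀ − V*‖`, hence `T^[n] V₀ → V*` in the sup norm. -/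
theorem bellmanOpt_value_iteration {S A : Type*} [Fintype S] [Fintype A]
    [Nonempty S] [Nonempty A]
    (p : S → A → PMF S) (r : S → A → ℝ) (γ : ℝ) (hγ0 : 0 ≤ γ) (hγ1 : γ < 1)
    (Vstar : S → ℝ) (hfix : bellmanOpt p r γ Vstar = Vstar) :
    ∀ V₀ : S → ℝ,
      (∀ n : ℕ, ‖(bellmanOpt p r γ)^[n] V₀ - Vstar‖ ≤ γ ^ n * ‖V₀ - Vstar‖) ∧
      Filter.Tendsto (fun n : ℕ => (bellmanOpt p r γ)^[n] V₀)
        Filter.atTop (nhds Vstar) :=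
  bellmanOpt_value_iteration_general p r γ hγ0 hγ1 Vstar hfix
end

section
/- Let S and A be nonempty finite types, p : S → A → PMF S a transition kernel, γ ∈ [0,1), and r₁, r₂ : S → A → ℝ two reward functions. Let C, B ⊆ S be sets such that: (i) r₁(s,a) = r₂(s,a) for all s ∈ C and a ∈ A, and (ii) for every s ∈ C and a ∈ A the support of p(·∣s,a) is contained in C ∪ B. Let V₁ and V₂ be the unique fixed points of the Bellman optimality operators T₁ and T₂ associated with r₁ and r₂ respectively. If V₁(s) = V₂(s) for all s ∈ B \ C, then V₁(s) = V₂(s) for all s ∈ C. (The optimal value inside the region C is completely determined by the rewards in C and the optimal values on its interface B.) -/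
/-!
Let `s₀` maximize `|V₁ - V₂|` over the finite set `C`. At `s₀` the two Bellman operators have
the same rewards, and every successor of `s₀` lies in `C` or in `B \ C`, where the difference
vanishes. The usual `γ`-contraction estimate at `s₀` then gives
`|V₁ s₀ - V₂ s₀| ≤ γ * |V₁ s₀ - V₂ s₀|`, so the maximal difference is `0` since `γ < 1`.
-/

theorem Finset.abs_sup'_sub_sup'_le {ι α : Type*} [AddCommGroup α] [LinearOrder α]
    [IsOrderedAddMonoid α] {s : Finset ι} (hs : s.Nonempty) {f g : ι → α} {ε : α}
    (h : ∀ i ∈ s, |f i - g i| ≤ ε) : |s.sup' hs f - s.sup' hs g| ≤ ε := by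
  have one_side : ∀ f g : ι → α, (∀ i ∈ s, |f i - g i| ≤ ε) → s.sup' hs f - s.sup' hs g ≤ ε := by
    intro f g h
    rw [sub_le_iff_le_add']
    refine Finset.sup'_le hs _ fun i hi => ?_
    calc f i ≤ g i + ε := sub_le_iff_le_add'.mp (le_of_abs_le (h i hi))
      _ ≤ s.sup' hs g + ε := add_le_add_left (le_sup' g hi) ε
  exact abs_sub_le_iff.mpr ⟨one_side f g h, one_side g f fun i hi => abs_sub_comm (g i) (f i) ▸ h i hi⟩

theorem PMF.sum_toReal_eq_one_s7 {α : Type*} [Fintype α] (q : PMF α) : ∑ a, (q a).toReal = 1 := by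
  rw [← ENNReal.toReal_sum fun a _ => q.apply_ne_top a,
    ← tsum_fintype (L := SummationFilter.unconditional _), q.tsum_coe, ENNReal.toReal_one]

theorem PMF.abs_sum_toReal_mul_le {α : Type*} [Fintype α] (q : PMF α) {f : α → ℝ} {M : ℝ}
    (h : ∀ a ∈ q.support, |f a| ≤ M) : |∑ a, (q a).toReal * f a| ≤ M :=
  calc |∑ a, (q a).toReal * f a| ≤ ∑ a, (q a).toReal * |f a| := by
        simpa only [abs_mul, ENNReal.abs_toReal] using Finset.abs_sum_le_sum_abs (fun a => (q a).toReal * f a) Finset.univ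
    _ ≤ ∑ a, (q a).toReal * M := Finset.sum_le_sum fun a _ => by
        by_cases ha : a ∈ q.support
        · exact mul_le_mul_of_nonneg_left (h a ha) ENNReal.toReal_nonneg
        · simp [(q.apply_eq_zero_iff a).mpr ha]
    _ = M := by rw [← Finset.sum_mul, q.sum_toReal_eq_one_s7, one_mul]

theorem abs_bellmanOpt_sub_le {S A : Type*} [Fintype S] [Fintype A] [Nonempty A]
    (p : S → A → PMF S) {γ : ℝ} (hγ : 0 ≤ γ) {r₁ r₂ : S → A → ℝ} {V₁ V₂ : S → ℝ} {s : S}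
    {M : ℝ} (hr : ∀ a, r₁ s a = r₂ s a)
    (hV : ∀ a, ∀ s' ∈ (p s a).support, |V₁ s' - V₂ s'| ≤ M) :
    |bellmanOpt p r₁ γ V₁ s - bellmanOpt p r₂ γ V₂ s| ≤ γ * M := by
  refine Finset.abs_sup'_sub_sup'_le _ fun a _ => ?_
  have hdiff : r₁ s a + γ * ∑ s', (p s a s').toReal * V₁ s'
      - (r₂ s a + γ * ∑ s', (p s a s').toReal * V₂ s')
      = γ * ∑ s', (p s a s').toReal * (V₁ s' - V₂ s') := by
    simp only [hr, mul_sub, Finset.sum_sub_distrib]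
    ring
  rw [hdiff, abs_mul, abs_of_nonneg hγ]
  exact mul_le_mul_of_nonneg_left ((p s a).abs_sum_toReal_mul_le (hV a)) hγ

theorem optimal_value_determined_by_interface_general {S A : Type*} [Fintype S] [Fintype A]
    [Nonempty A]
    (p : S → A → PMF S) (γ : ℝ) (hγ0 : 0 ≤ γ) (hγ1 : γ < 1)
    (r₁ r₂ : S → A → ℝ) (C B : Set S)
    (hr : ∀ s ∈ C, ∀ a : A, r₁ s a = r₂ s a)
    (hsupp : ∀ s ∈ C, ∀ a : A, (p s a).support ⊆ C ∪ B)
    (V₁ V₂ : S → ℝ)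
    (hV₁ : bellmanOpt p r₁ γ V₁ = V₁) (hV₂ : bellmanOpt p r₂ γ V₂ = V₂)
    (hB : ∀ s ∈ B \ C, V₁ s = V₂ s) :
    ∀ s ∈ C, V₁ s = V₂ s := by
  intro s hs
  set d : S → ℝ := fun s => |V₁ s - V₂ s|
  obtain ⟨s₀, hs₀, hmax⟩ := Set.exists_max_image C d C.toFinite ⟨s, hs⟩
  have hbound : ∀ s' ∈ C ∪ B, d s' ≤ d s₀ := by
    rintro s' (hC | hB')
    · exact hmax s' hC
    · by_cases hC : s' ∈ C
      · exact hmax s' hC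
      · simpa only [d, hB s' ⟨hB', hC⟩, sub_self, abs_zero] using abs_nonneg _
  have hcontract : d s₀ ≤ γ * d s₀ := by
    have := abs_bellmanOpt_sub_le p hγ0 (hr s₀ hs₀) fun a s' hs' => hbound s' (hsupp s₀ hs₀ a hs')
    rwa [hV₁, hV₂] at this
  have hzero : d s₀ ≤ 0 := by nlinarith [abs_nonneg (V₁ s₀ - V₂ s₀)]
  exact sub_eq_zero.mp (abs_nonpos_iff.mp ((hmax s hs).trans hzero))

/-- If a region `C` has the same rewards under `r₁` and `r₂`, all transitions
from `C` stay in `C ∪ B`, and the optimal values agree on the interface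
`B \ C`, then the optimal values agree on all of `C`. -/
theorem optimal_value_determined_by_interface {S A : Type*} [Fintype S] [Fintype A]
    [Nonempty S] [Nonempty A]
    (p : S → A → PMF S) (γ : ℝ) (hγ0 : 0 ≤ γ) (hγ1 : γ < 1)
    (r₁ r₂ : S → A → ℝ) (C B : Set S)
    (hr : ∀ s ∈ C, ∀ a : A, r₁ s a = r₂ s a)
    (hsupp : ∀ s ∈ C, ∀ a : A, (p s a).support ⊆ C ∪ B)
    (V₁ V₂ : S → ℝ)
    (hV₁ : bellmanOpt p r₁ γ V₁ = V₁) (hV₂ : bellmanOpt p r₂ γ V₂ = V₂)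
    (hB : ∀ s ∈ B \ C, V₁ s = V₂ s) :
    ∀ s ∈ C, V₁ s = V₂ s :=
  optimal_value_determined_by_interface_general p γ hγ0 hγ1 r₁ r₂ C B hr hsupp V₁ V₂ hV₁ hV₂ hB
end
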